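/- arXiv:1107.0145 — 2 statements merged into one kernel-verified Lean document; each statement's English description precedes it below -/
import Mathlib

section
/- Let S be an N×N Hermitian positive semidefinite complex matrix and ρ > 0. Then (1/N)·log det(S + ρ·I) = log ρ + ∫_ρ^∞ (1/w − (1/N)·tr (S + w·I)^{-1}) dw. -/
open Matrix
open scoped ComplexOrder

open MeasureTheory

/-!
Diagonalising `S = U diag(λ) U*` turns `det (S + w I)` into `∏ i, (λ i + w)` and
`tr (S + w I)⁻¹` into `∑ i, (λ i + w)⁻¹`, so the identity splits into the scalar identities
`log (λ + ρ) = log ρ + ∫_ρ^∞ (1/w - 1/(λ + w)) dw`, whose integrand has the antiderivative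
`log w - log (λ + w)`, vanishing at infinity.
-/

open Filter Topology Set

namespace Matrix

variable {n : Type*} [Fintype n] [DecidableEq n]

theorem trace_inv_conj_of_mul_eq_one {R : Type*} [CommRing R] {M M' N : Matrix n n R}
    (hM'M : M' * M = 1) : (M * N * M')⁻¹.trace = N⁻¹.trace := by
  rw [mul_inv_rev, mul_inv_rev, trace_mul_comm, Matrix.mul_assoc, ← mul_inv_rev, hM'M, inv_one,
    Matrix.mul_one]

namespace IsHermitian

variable {𝕜 : Type*} [RCLike 𝕜] {A : Matrix n n 𝕜} (hA : A.IsHermitian)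

theorem add_smul_one_eq_conj (w : ℝ) :
    A + (w : 𝕜) • 1 = Unitary.conjStarAlgAut 𝕜 _ hA.eigenvectorUnitary
      (diagonal fun i => ((hA.eigenvalues i + w : ℝ) : 𝕜)) := by
  conv_lhs => rw [hA.spectral_theorem]
  rw [← Algebra.algebraMap_eq_smul_one,
    ← AlgEquiv.commutes (Unitary.conjStarAlgAut 𝕜 _ hA.eigenvectorUnitary).toAlgEquiv w,
    StarAlgEquiv.coe_toAlgEquiv, ← map_add, algebraMap_eq_diagonal, diagonal_add]
  congr 2 with i
  simp

theorem det_add_smul_one (w : ℝ) :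
    (A + (w : 𝕜) • 1).det = ((∏ i, (hA.eigenvalues i + w) : ℝ) : 𝕜) := by
  rw [hA.add_smul_one_eq_conj, Unitary.conjStarAlgAut_apply,
    det_conj_of_mul_eq_one (Unitary.coe_mul_star_self _) (Unitary.coe_star_mul_self _),
    det_diagonal, RCLike.ofReal_prod]

theorem trace_inv_add_smul_one {w : ℝ} (hw : ∀ i, hA.eigenvalues i + w ≠ 0) :
    (A + (w : 𝕜) • 1)⁻¹.trace = ((∑ i, (hA.eigenvalues i + w)⁻¹ : ℝ) : 𝕜) := by
  have hinv : (diagonal fun i => ((hA.eigenvalues i + w : ℝ) : 𝕜))⁻¹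
      = diagonal fun i => (((hA.eigenvalues i + w)⁻¹ : ℝ) : 𝕜) := by
    refine inv_eq_right_inv ?_
    rw [diagonal_mul_diagonal, ← diagonal_one]
    congr with i
    rw [← RCLike.ofReal_mul, mul_inv_cancel₀ (hw i), RCLike.ofReal_one]
  rw [hA.add_smul_one_eq_conj, Unitary.conjStarAlgAut_apply,
    trace_inv_conj_of_mul_eq_one (Unitary.coe_star_mul_self _), hinv, trace_diagonal,
    RCLike.ofReal_sum]

end IsHermitian

end Matrix

namespace Real

theorem hasDerivAt_log_sub_log_add {a x : ℝ} (hx : 0 < x) (hax : 0 < a + x) :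
    HasDerivAt (fun w => log w - log (a + w)) (1 / x - (a + x)⁻¹) x := by
  rw [one_div]
  exact (hasDerivAt_log hx.ne').sub ((hasDerivAt_log hax.ne').comp_const_add a x)

theorem tendsto_log_sub_log_add_atTop (a : ℝ) :
    Tendsto (fun w => log w - log (a + w)) atTop (𝓝 0) := by
  simpa [add_comm] using (tendsto_log_comp_add_sub_log a).neg

variable {a ρ : ℝ}

theorem integrableOn_Ioi_one_div_sub_inv_add (ha : 0 ≤ a) (hρ : 0 < ρ) :
    IntegrableOn (fun w => 1 / w - (a + w)⁻¹) (Ioi ρ) := by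
  refine integrableOn_Ioi_deriv_of_nonneg'
    (fun x hx => hasDerivAt_log_sub_log_add (hρ.trans_le hx) (by linarith [hρ.trans_le hx]))
    (fun x hx => ?_) (tendsto_log_sub_log_add_atTop a)
  have hx : 0 < x := hρ.trans hx
  rw [one_div, sub_nonneg]
  exact inv_anti₀ hx (by linarith)

theorem integral_Ioi_one_div_sub_inv_add (ha : 0 ≤ a) (hρ : 0 < ρ) :
    ∫ w in Ioi ρ, (1 / w - (a + w)⁻¹) = log (a + ρ) - log ρ := by
  rw [integral_Ioi_of_hasDerivAt_of_tendsto'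
    (fun x hx => hasDerivAt_log_sub_log_add (hρ.trans_le hx) (by linarith [hρ.trans_le hx]))
    (integrableOn_Ioi_one_div_sub_inv_add ha hρ) (tendsto_log_sub_log_add_atTop a)]
  ring

theorem log_prod_add_eq_log_add_integral {ι : Type*} [Fintype ι] [Nonempty ι] {a : ι → ℝ}
    (ha : ∀ i, 0 ≤ a i) (hρ : 0 < ρ) :
    (Fintype.card ι : ℝ)⁻¹ * log (∏ i, (a i + ρ))
      = log ρ + ∫ w in Ioi ρ, (1 / w - (Fintype.card ι : ℝ)⁻¹ * ∑ i, (a i + w)⁻¹) := by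
  have integrand (w : ℝ) : 1 / w - (Fintype.card ι : ℝ)⁻¹ * ∑ i, (a i + w)⁻¹
      = (Fintype.card ι : ℝ)⁻¹ * ∑ i, (1 / w - (a i + w)⁻¹) := by
    rw [Finset.sum_sub_distrib, Finset.sum_const, Finset.card_univ, nsmul_eq_mul]
    field_simp
  simp_rw [integrand]
  rw [integral_const_mul,
    integral_finsetSum _ fun i _ => integrableOn_Ioi_one_div_sub_inv_add (ha i) hρ]
  simp_rw [integral_Ioi_one_div_sub_inv_add (ha _) hρ]
  rw [log_prod fun i _ => by linarith [ha i], Finset.sum_sub_distrib, Finset.sum_const,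
    Finset.card_univ, nsmul_eq_mul]
  field_simp
  ring

end Real

theorem log_det_eq_log_add_integral {N : ℕ} (hN : 0 < N)
    (S : Matrix (Fin N) (Fin N) ℂ) (hS : S.PosSemidef) (ρ : ℝ) (hρ : 0 < ρ) :
    (N : ℝ)⁻¹ * Real.log ((S + (ρ : ℂ) • 1).det.re)
      = Real.log ρ + ∫ w in Set.Ioi ρ,
          (1 / w - (N : ℝ)⁻¹ * (((S + (w : ℂ) • 1)⁻¹).trace.re)) := by
  have : Nonempty (Fin N) := ⟨⟨0, hN⟩⟩
  have hnonneg := hS.eigenvalues_nonneg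
  have hdet : (S + (ρ : ℂ) • 1).det = ((∏ i, (hS.1.eigenvalues i + ρ) : ℝ) : ℂ) :=
    hS.1.det_add_smul_one ρ
  have htrace : ∀ w ∈ Ioi ρ, 1 / w - (N : ℝ)⁻¹ * ((S + (w : ℂ) • 1)⁻¹).trace.re
      = 1 / w - (N : ℝ)⁻¹ * ∑ i, (hS.1.eigenvalues i + w)⁻¹ := fun w hw => by
    have h : ((S + (w : ℂ) • 1)⁻¹).trace = ((∑ i, (hS.1.eigenvalues i + w)⁻¹ : ℝ) : ℂ) :=
      hS.1.trace_inv_add_smul_one fun i => by linarith [hnonneg i, hρ.trans hw]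
    rw [h, Complex.ofReal_re]
  rw [setIntegral_congr_fun measurableSet_Ioi htrace, hdet, Complex.ofReal_re]
  simpa using Real.log_prod_add_eq_log_add_integral hnonneg hρ
end

section
/- Let T be an N×N Hermitian positive definite matrix and D an N×N Hermitian positive semidefinite matrix. Then tr(D²) ≤ tr(TDTD) · ‖T^{-1}‖². -/
/-! With `S = T^{1/2}` and `M = S D S`, cyclicity of the trace gives `tr(TDTD) = tr(M²)` and
`tr(D²) = tr(M T⁻¹ M T⁻¹)`. Since `0 ≤ T⁻¹ ≤ c` for `c = ‖T⁻¹‖`, conjugating by `M` gives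
`M T⁻¹ M ≤ c M²`; monotonicity of `X ↦ tr(X T⁻¹)` and of the trace then yield
`tr(M T⁻¹ M T⁻¹) ≤ c tr(M² T⁻¹) = c tr(M T⁻¹ M) ≤ c² tr(M²)`. -/

open Matrix
open scoped ComplexOrder MatrixOrder Matrix.Norms.L2Operator

namespace Matrix

variable {n : Type*} [Fintype n]

lemma trace_conj_mul_conj {R : Type*} [CommRing R] (S D : Matrix n n R) :
    (S * D * S * (S * D * S)).trace = (S * S * D * (S * S) * D).trace := by
  rw [← trace_mul_cycle]
  simp only [mul_assoc]

lemma trace_conj_mul_mul_conj_mul [DecidableEq n] {R : Type*} [CommRing R] {S B : Matrix n n R}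
    (hSBS : S * B * S = 1) (D : Matrix n n R) :
    (S * D * S * B * (S * D * S) * B).trace = (D * D).trace := by
  have h : S * D * S * B * (S * D * S) * B = S * (D * D) * (S * B) :=
    calc _ = S * D * (S * B * S) * D * (S * B) := by simp only [mul_assoc]
      _ = _ := by rw [hSBS, mul_one]; simp only [mul_assoc]
  rw [h, trace_mul_comm, ← mul_assoc, ← mul_assoc, hSBS, one_mul]

variable {𝕜 : Type*} [RCLike 𝕜]

lemma trace_mono {X Y : Matrix n n 𝕜} (hXY : X ≤ Y) : X.trace ≤ Y.trace := by
  rw [← sub_nonneg, ← trace_sub]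
  exact (nonneg_iff_posSemidef.mp (sub_nonneg.mpr hXY)).trace_nonneg

variable [DecidableEq n]

lemma trace_mul_nonneg {A B : Matrix n n 𝕜} (hA : 0 ≤ A) (hB : 0 ≤ B) :
    0 ≤ (A * B).trace := by
  obtain ⟨S, rfl⟩ := CStarAlgebra.nonneg_iff_eq_star_mul_self.mp hA
  rw [mul_assoc, trace_mul_comm, ← trace_zero n 𝕜]
  exact trace_mono (star_right_conjugate_nonneg hB S)

lemma trace_mul_le_trace_mul_of_le {X Y B : Matrix n n 𝕜} (hXY : X ≤ Y) (hB : 0 ≤ B) :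
    (X * B).trace ≤ (Y * B).trace := by
  rw [← sub_nonneg, ← trace_sub, ← sub_mul]
  exact trace_mul_nonneg (sub_nonneg.mpr hXY) hB

lemma trace_mul_mul_mul_le_of_le_algebraMap {A B : Matrix n n 𝕜} (hA : IsSelfAdjoint A)
    (hB : 0 ≤ B) {c : ℝ} (hc : 0 ≤ c) (hBc : B ≤ algebraMap ℝ _ c) :
    (A * B * A * B).trace ≤ (c ^ 2 : ℝ) • (A * A).trace := by
  have hABA : A * B * A ≤ c • (A * A) := by
    simpa [hA.star_eq, Algebra.algebraMap_eq_smul_one] using star_left_conjugate_le_conjugate hBc A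
  calc (A * B * A * B).trace
      ≤ (c • (A * A) * B).trace := trace_mul_le_trace_mul_of_le hABA hB
    _ = c • (A * B * A).trace := by
      rw [smul_mul_assoc, trace_smul, mul_assoc, trace_mul_comm, mul_assoc]
    _ ≤ c • (c • (A * A)).trace := smul_le_smul_of_nonneg_left (trace_mono hABA) hc
    _ = (c ^ 2 : ℝ) • (A * A).trace := by rw [trace_smul, smul_smul, sq]

end Matrix

theorem trace_sq_le_trace_TDTD_mul_opNorm_inv_sq {N : ℕ}
    (T D : Matrix (Fin N) (Fin N) ℂ) (hT : T.PosDef) (hD : D.PosSemidef) :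
    ((D * D).trace).re
      ≤ ((T * D * T * D).trace).re * ‖Matrix.toEuclideanCLM (𝕜 := ℂ) T⁻¹‖ ^ 2 := by
  set S := CFC.sqrt T
  have hSS : S * S = T := CFC.sqrt_mul_sqrt_self T hT.posSemidef.nonneg
  have hSTS : S * T⁻¹ * S = 1 := by
    rw [mul_assoc, mul_eq_one_comm, mul_assoc, hSS]
    exact nonsing_inv_mul T ((isUnit_iff_isUnit_det T).mp hT.isUnit)
  have hM : IsSelfAdjoint (S * D * S) :=
    IsSelfAdjoint.conjugate_self hD.isHermitian (CFC.sqrt_nonneg T).isSelfAdjoint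
  have hTinv : 0 ≤ T⁻¹ := hT.inv.posSemidef.nonneg
  have key := Complex.re_le_re <| trace_mul_mul_mul_le_of_le_algebraMap hM hTinv
    (norm_nonneg T⁻¹) (IsSelfAdjoint.le_algebraMap_norm_self hTinv.isSelfAdjoint)
  rwa [trace_conj_mul_mul_conj_mul hSTS, trace_conj_mul_conj, hSS, Complex.smul_re,
    smul_eq_mul, mul_comm, cstar_norm_def] at key
end
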